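/- Let X, Y be Polish spaces and c : X × Y → [0,∞] Borel measurable. Let Γ ⊆ X × Y be c-monotone with c finite on Γ, and assume (Γ,c) is connecting. Fix (x₀,y₀) ∈ Γ and define φ(x) = inf over n ≥ 1 and (x₁,y₁),…,(xₙ,yₙ) ∈ Γ of (c(x,yₙ) − c(xₙ,yₙ)) + ∑_{i=0}^{n-1} (c(x_{i+1},yᵢ) − c(xᵢ,yᵢ)). Then φ is finite (real-valued) on the projection p_X[Γ], and moreover φ(x) ≤ φ(x') + c(x,y) − c(x',y) for all x ∈ X and all (x',y) ∈ Γ. -/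

import Mathlib

/-!
Concatenating a chain from `p₀` with a chain of finite edge costs from `(x, y)` back to `p₀`
gives a cycle in `Γ`; c-monotonicity of that cycle bounds the value of every chain for `x` from
below by minus the cost of the return chain, so `φ x > ⊥`. Prepending `p₀` to a chain from `p₀`
to `(x, y) ∈ Γ` gives a chain of finite value, so `φ x < ⊤`. Appending `(x', y)` to a chain for
`x'` gives a chain for `x` whose value is larger by exactly `c (x, y) - c (x', y)`; taking
infima yields the inequality.
-/

open MeasureTheory Set
open scoped ENNReal

noncomputable section

def IsCoupling {X Y : Type*} [MeasurableSpace X] [MeasurableSpace Y]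
    (μ : Measure X) (ν : Measure Y) (π : Measure (X × Y)) : Prop :=
  π.map Prod.fst = μ ∧ π.map Prod.snd = ν

def CMonotoneSet {X Y : Type*} (c : X × Y → ℝ≥0∞) (Γ : Set (X × Y)) : Prop :=
  ∀ (n : ℕ) (f : Fin (n + 1) → X × Y), (∀ i, f i ∈ Γ) →
    ∑ i, c (f i) ≤ ∑ i, c ((f i).1, (f (i + 1)).2)

def ChainLe {X Y : Type*} (c : X × Y → ℝ≥0∞) (Γ : Set (X × Y)) (p q : X × Y) : Prop :=
  ∃ (n : ℕ) (g : Fin (n + 1) → X × Y), (∀ i, g i ∈ Γ) ∧ g 0 = p ∧ g (Fin.last n) = q ∧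
    ∀ i : Fin n, c ((g i.succ).1, (g i.castSucc).2) < ⊤

def ChainEquiv {X Y : Type*} (c : X × Y → ℝ≥0∞) (Γ : Set (X × Y)) (p q : X × Y) : Prop :=
  ChainLe c Γ p q ∧ ChainLe c Γ q p

def Connecting {X Y : Type*} (c : X × Y → ℝ≥0∞) (Γ : Set (X × Y)) : Prop :=
  (∀ p ∈ Γ, c p < ⊤) ∧ ∀ p ∈ Γ, ∀ q ∈ Γ, ChainEquiv c Γ p q

noncomputable def ruPhi {X Y : Type*} (c : X × Y → ℝ≥0∞) (Γ : Set (X × Y))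
    (p₀ : X × Y) (x : X) : EReal :=
  sInf { r : EReal | ∃ (n : ℕ) (g : Fin (n + 1) → X × Y), 1 ≤ n ∧ g 0 = p₀ ∧
    (∀ i, g i ∈ Γ) ∧
    r = ((c (x, (g (Fin.last n)).2)).toEReal - (c (g (Fin.last n))).toEReal) +
      ∑ i : Fin n, ((c ((g i.succ).1, (g i.castSucc).2)).toEReal -
        (c (g i.castSucc)).toEReal) }

namespace EReal

lemma coe_ennreal_sub_add_coe_ennreal_sub (a₁ b₁ a₂ b₂ : ℝ≥0∞) :
    ((a₁ : EReal) - b₁) + ((a₂ : EReal) - b₂) = ((a₁ + a₂ : ℝ≥0∞) : EReal) - (b₁ + b₂ : ℝ≥0∞) := by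
  rw [sub_eq_add_neg, sub_eq_add_neg, sub_eq_add_neg, coe_ennreal_add, coe_ennreal_add,
    neg_add (.inl (coe_ennreal_ne_bot _)) (.inr (coe_ennreal_ne_bot _)), sub_eq_add_neg,
    add_add_add_comm]

lemma sum_coe_ennreal_sub {ι : Type*} (s : Finset ι) (a b : ι → ℝ≥0∞) :
    ∑ i ∈ s, ((a i : EReal) - b i) = ((∑ i ∈ s, a i : ℝ≥0∞) : EReal) - (∑ i ∈ s, b i : ℝ≥0∞) := by
  induction s using Finset.cons_induction with
  | empty => simp
  | cons j s hj ih =>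
    rw [Finset.sum_cons, Finset.sum_cons, Finset.sum_cons, ih, coe_ennreal_sub_add_coe_ennreal_sub]

lemma neg_coe_ennreal_le_sub {a b e : ℝ≥0∞} (hb : b ≠ ⊤) (h : b ≤ a + e) :
    -(e : EReal) ≤ a - b := by
  rw [le_sub_iff_add_le (.inl (coe_ennreal_ne_bot b)) (.inl (by simpa using hb)), add_comm,
    ← sub_eq_add_neg, sub_le_iff_le_add (.inl (coe_ennreal_ne_bot e)) (.inr (coe_ennreal_ne_bot a)),
    ← coe_ennreal_add, coe_ennreal_le_coe_ennreal_iff]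
  exact h

lemma coe_ennreal_sub_ne_top {a : ℝ≥0∞} (ha : a ≠ ⊤) (b : ℝ≥0∞) : (a : EReal) - b ≠ ⊤ :=
  ne_top_of_le_ne_top (coe_ennreal_eq_top_iff.not.2 ha)
    ((sub_le_sub le_rfl (coe_ennreal_nonneg b)).trans_eq (sub_zero _))

lemma le_sInf_add {S : Set EReal} {a δ : EReal} (hδ : δ ≠ ⊥) (hS : sInf S ≠ ⊥)
    (h : ∀ r ∈ S, a ≤ r + δ) : a ≤ sInf S + δ := by
  induction δ with
  | bot => exact absurd rfl hδ
  | top => rw [add_top_of_ne_bot hS]; exact le_top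
  | coe d =>
    have sub_le_iff (r : EReal) : a - d ≤ r ↔ a ≤ r + d :=
      sub_le_iff_le_add (.inl (coe_ne_bot d)) (.inl (coe_ne_top d))
    exact (sub_le_iff _).1 (le_sInf fun r hr => (sub_le_iff r).2 (h r hr))

end EReal

section Chains

variable {X Y : Type*}

-- `g 0` is dropped: this is `h` followed by `g` only when `h (Fin.last m) = g 0`.
def chainConcat {m n : ℕ} (h : Fin (m + 1) → X × Y) (g : Fin (n + 1) → X × Y) :
    Fin (m + n + 1) → X × Y :=
  fun i => if hi : (i : ℕ) ≤ m then h ⟨i, by omega⟩ else g ⟨i - m, by omega⟩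

lemma chainConcat_apply_left {m n : ℕ} (h : Fin (m + 1) → X × Y) (g : Fin (n + 1) → X × Y)
    {i : Fin (m + n + 1)} {j : Fin (m + 1)} (hij : (i : ℕ) = j) : chainConcat h g i = h j := by
  rw [chainConcat, dif_pos (by omega)]
  exact congrArg h (Fin.ext hij)

lemma chainConcat_apply_right {m n : ℕ} {h : Fin (m + 1) → X × Y} {g : Fin (n + 1) → X × Y}
    (hjoin : h (Fin.last m) = g 0) {i : Fin (m + n + 1)} {k : Fin (n + 1)}
    (hik : (i : ℕ) = m + k) : chainConcat h g i = g k := by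
  by_cases hk : (k : ℕ) = 0
  · rw [chainConcat_apply_left h g (j := Fin.last m) (by simp [hik, hk]), hjoin]
    exact congrArg g (Fin.ext hk.symm)
  · rw [chainConcat, dif_neg (by omega)]
    exact congrArg g (Fin.ext (by simp [hik]))

variable (c : X × Y → ℝ≥0∞)

def shiftCost {n : ℕ} (g : Fin (n + 1) → X × Y) : ℝ≥0∞ :=
  ∑ i : Fin n, c ((g i.succ).1, (g i.castSucc).2)

def chainValue (x : X) {n : ℕ} (g : Fin (n + 1) → X × Y) : EReal :=
  ((c (x, (g (Fin.last n)).2)).toEReal - (c (g (Fin.last n))).toEReal) +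
    ∑ i : Fin n, ((c ((g i.succ).1, (g i.castSucc).2)).toEReal - (c (g i.castSucc)).toEReal)

variable {c}

lemma shiftCost_cons {n : ℕ} (q : X × Y) (g : Fin (n + 1) → X × Y) :
    shiftCost c (Fin.cons q g : Fin (n + 2) → X × Y) = c ((g 0).1, q.2) + shiftCost c g := by
  simp [shiftCost, Fin.sum_univ_succ]

lemma shiftCost_chainConcat {m n : ℕ} {h : Fin (m + 1) → X × Y} {g : Fin (n + 1) → X × Y}
    (hjoin : h (Fin.last m) = g 0) :
    shiftCost c (chainConcat h g) = shiftCost c h + shiftCost c g := by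
  rw [shiftCost, Fin.sum_univ_add]
  congr 1 <;> refine Finset.sum_congr rfl fun i _ => ?_
  · rw [chainConcat_apply_left h g (j := i.succ) (by simp),
      chainConcat_apply_left h g (j := i.castSucc) (by simp)]
  · rw [chainConcat_apply_right hjoin (k := i.succ) (by simp; omega),
      chainConcat_apply_right hjoin (k := i.castSucc) (by simp)]

lemma chainValue_eq_sub (x : X) {n : ℕ} (g : Fin (n + 1) → X × Y) :
    chainValue c x g =
      ((c (x, (g (Fin.last n)).2) + shiftCost c g : ℝ≥0∞) : EReal) - (∑ i, c (g i) : ℝ≥0∞) := by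
  rw [chainValue, EReal.sum_coe_ennreal_sub, EReal.coe_ennreal_sub_add_coe_ennreal_sub,
    Fin.sum_univ_castSucc (fun i => c (g i)), add_comm (c (g (Fin.last n))), shiftCost]

lemma chainValue_snoc (x : X) {n : ℕ} (g : Fin (n + 1) → X × Y) (q : X × Y) :
    chainValue c x (Fin.snoc g q : Fin (n + 2) → X × Y) =
      chainValue c q.1 g + ((c (x, q.2)).toEReal - (c q).toEReal) := by
  simp only [chainValue, Fin.sum_univ_castSucc (n := n), Fin.snoc_last, Fin.snoc_castSucc,
    Fin.succ_last, Fin.succ_castSucc]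
  ac_rfl

variable {Γ : Set (X × Y)}

lemma CMonotoneSet.sum_le_add_shiftCost (hmono : CMonotoneSet c Γ) {n : ℕ}
    (f : Fin (n + 1) → X × Y) (hf : ∀ i, f i ∈ Γ) :
    ∑ i, c (f i) ≤ c ((f 0).1, (f (Fin.last n)).2) + shiftCost c f := by
  -- `CMonotoneSet` pairs `x i` with `y (i + 1)`; on the reversed family this becomes the
  -- chain orientation `x (i + 1)`, `y i`.
  calc ∑ i, c (f i) = ∑ i : Fin (n + 1), c (f i.rev) := (Equiv.sum_comp Fin.revPerm _).symm
    _ ≤ ∑ i : Fin (n + 1), c ((f i.rev).1, (f (i + 1).rev).2) := hmono n _ fun i => hf _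
    _ = _ := by
      rw [Fin.sum_univ_castSucc, add_comm, shiftCost,
        ← Equiv.sum_comp Fin.revPerm (fun i => c ((f i.succ).1, (f i.castSucc).2))]
      simp [Fin.rev_castSucc, Fin.coeSucc_eq_succ, Fin.rev_succ]

lemma CMonotoneSet.sum_le_add_shiftCost_add_shiftCost (hmono : CMonotoneSet c Γ) {m n : ℕ}
    {h : Fin (m + 1) → X × Y} {g : Fin (n + 1) → X × Y} (hh : ∀ j, h j ∈ Γ) (hg : ∀ i, g i ∈ Γ)
    (hjoin : h (Fin.last m) = g 0) :
    ∑ i, c (g i) ≤ c ((h 0).1, (g (Fin.last n)).2) + shiftCost c g + shiftCost c h := by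
  have hf : ∀ i, chainConcat h g i ∈ Γ := by
    intro i
    by_cases hi : (i : ℕ) ≤ m
    · rw [chainConcat_apply_left h g (j := ⟨i, by omega⟩) rfl]; exact hh _
    · rw [chainConcat_apply_right hjoin (k := ⟨i - m, by omega⟩) (by simp; omega)]; exact hg _
  have hsum : ∑ i, c (g i) ≤ ∑ i : Fin (m + (n + 1)), c (chainConcat h g i) := by
    have concat_natAdd (k : Fin (n + 1)) : chainConcat h g (Fin.natAdd m k) = g k :=
      chainConcat_apply_right hjoin (by simp)
    simp only [Fin.sum_univ_add, concat_natAdd]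
    exact le_add_self
  calc ∑ i, c (g i) ≤ ∑ i, c (chainConcat h g i) := hsum
    _ ≤ _ := hmono.sum_le_add_shiftCost _ hf
    _ = _ := by
      rw [chainConcat_apply_left h g (j := 0) rfl,
        chainConcat_apply_right hjoin (k := Fin.last n) (by simp), shiftCost_chainConcat hjoin,
        add_comm (shiftCost c h), add_assoc]

end Chains

section Potential

variable {X Y : Type*} {c : X × Y → ℝ≥0∞} {Γ : Set (X × Y)} {p₀ : X × Y}

lemma ruPhi_eq_sInf (x : X) :
    ruPhi c Γ p₀ x = sInf {r | ∃ (n : ℕ) (g : Fin (n + 1) → X × Y), 1 ≤ n ∧ g 0 = p₀ ∧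
      (∀ i, g i ∈ Γ) ∧ r = chainValue c x g} :=
  rfl

lemma ruPhi_le_chainValue (x : X) {n : ℕ} (hn : 1 ≤ n) {g : Fin (n + 1) → X × Y}
    (hg₀ : g 0 = p₀) (hg : ∀ i, g i ∈ Γ) : ruPhi c Γ p₀ x ≤ chainValue c x g :=
  sInf_le ⟨n, g, hn, hg₀, hg, rfl⟩

lemma ruPhi_ne_top (hΓfin : ∀ p ∈ Γ, c p < ⊤) (hp₀ : p₀ ∈ Γ) {x : X} {y : Y} (hxy : (x, y) ∈ Γ)
    (hchain : ChainLe c Γ p₀ (x, y)) : ruPhi c Γ p₀ x ≠ ⊤ := by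
  obtain ⟨n, g, hg, hg₀, hg_last, hedge⟩ := hchain
  have hcons : ∀ i, (Fin.cons p₀ g : Fin (n + 2) → X × Y) i ∈ Γ := Fin.cases hp₀ hg
  refine ne_top_of_le_ne_top ?_ (ruPhi_le_chainValue x (Nat.le_add_left 1 n) rfl hcons)
  have hshift : shiftCost c g ≠ ⊤ := (ENNReal.sum_lt_top.2 fun i _ => hedge i).ne
  rw [chainValue_eq_sub, shiftCost_cons, ← Fin.succ_last, Fin.cons_succ, hg_last, hg₀]
  exact EReal.coe_ennreal_sub_ne_top
    (ENNReal.add_ne_top.2 ⟨(hΓfin _ hxy).ne, ENNReal.add_ne_top.2 ⟨(hΓfin _ hp₀).ne, hshift⟩⟩) _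

lemma ruPhi_ne_bot (hmono : CMonotoneSet c Γ) (hΓfin : ∀ p ∈ Γ, c p < ⊤) {x : X} {y : Y}
    (hchain : ChainLe c Γ (x, y) p₀) : ruPhi c Γ p₀ x ≠ ⊥ := by
  obtain ⟨m, h, hh, hh₀, hh_last, hedge⟩ := hchain
  have hshift : shiftCost c h ≠ ⊤ := (ENNReal.sum_lt_top.2 fun i _ => hedge i).ne
  refine ne_bot_of_le_ne_bot (b := -(shiftCost c h : EReal)) (by simpa using hshift) ?_
  rw [ruPhi_eq_sInf]
  refine le_sInf ?_
  rintro _ ⟨n, g, -, hg₀, hg, rfl⟩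
  rw [chainValue_eq_sub]
  refine EReal.neg_coe_ennreal_le_sub (ENNReal.sum_lt_top.2 fun i _ => hΓfin _ (hg i)).ne ?_
  simpa [hh₀] using hmono.sum_le_add_shiftCost_add_shiftCost hh hg (hh_last.trans hg₀.symm)

lemma ruPhi_le_ruPhi_add (hΓfin : ∀ p ∈ Γ, c p < ⊤) {x x' : X} {y : Y} (hx'y : (x', y) ∈ Γ)
    (hbot : ruPhi c Γ p₀ x' ≠ ⊥) :
    ruPhi c Γ p₀ x ≤ ruPhi c Γ p₀ x' + ((c (x, y)).toEReal - (c (x', y)).toEReal) := by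
  have hδ : (c (x, y)).toEReal - (c (x', y)).toEReal ≠ ⊥ :=
    ne_bot_of_le_ne_bot (by simpa using (hΓfin _ hx'y).ne)
      (EReal.neg_coe_ennreal_le_sub (hΓfin _ hx'y).ne le_add_self)
  rw [ruPhi_eq_sInf x']
  refine EReal.le_sInf_add hδ hbot ?_
  rintro _ ⟨n, g, hn, hg₀, hg, rfl⟩
  have hsnoc : ∀ i, (Fin.snoc g (x', y) : Fin (n + 2) → X × Y) i ∈ Γ :=
    Fin.lastCases (by simpa using hx'y) (by simpa using hg)
  exact (ruPhi_le_chainValue x (by omega) (by simpa using hg₀) hsnoc).trans_eq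
    (chainValue_snoc x g (x', y))

end Potential

theorem ruPhi_finite_and_ineq_general
    {X Y : Type*}
    (c : X × Y → ℝ≥0∞)
    (Γ : Set (X × Y)) (hmono : CMonotoneSet c Γ) (hΓfin : ∀ p ∈ Γ, c p < ⊤)
    (hconn : Connecting c Γ)
    (p₀ : X × Y) (hp₀ : p₀ ∈ Γ) :
    (∀ x ∈ Prod.fst '' Γ, ruPhi c Γ p₀ x ≠ ⊤ ∧ ruPhi c Γ p₀ x ≠ ⊥) ∧
    (∀ (x x' : X) (y : Y), (x', y) ∈ Γ →
      ruPhi c Γ p₀ x ≤ ruPhi c Γ p₀ x' + ((c (x, y)).toEReal - (c (x', y)).toEReal)) := by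
  have ne_bot {x : X} {y : Y} (hxy : (x, y) ∈ Γ) : ruPhi c Γ p₀ x ≠ ⊥ :=
    ruPhi_ne_bot hmono hΓfin (hconn.2 _ hxy _ hp₀).1
  refine ⟨?_, fun x x' y hx'y => ruPhi_le_ruPhi_add hΓfin hx'y (ne_bot hx'y)⟩
  rintro _ ⟨⟨x, y⟩, hxy, rfl⟩
  exact ⟨ruPhi_ne_top hΓfin hp₀ hxy (hconn.2 _ hp₀ _ hxy).1, ne_bot hxy⟩

theorem ruPhi_finite_and_ineq
    {X Y : Type*} [MeasurableSpace X] [TopologicalSpace X] [PolishSpace X] [BorelSpace X]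
    [MeasurableSpace Y] [TopologicalSpace Y] [PolishSpace Y] [BorelSpace Y]
    (c : X × Y → ℝ≥0∞) (hc : Measurable c)
    (Γ : Set (X × Y)) (hmono : CMonotoneSet c Γ) (hΓfin : ∀ p ∈ Γ, c p < ⊤)
    (hconn : Connecting c Γ)
    (p₀ : X × Y) (hp₀ : p₀ ∈ Γ) :
    (∀ x ∈ Prod.fst '' Γ, ruPhi c Γ p₀ x ≠ ⊤ ∧ ruPhi c Γ p₀ x ≠ ⊥) ∧
    (∀ (x x' : X) (y : Y), (x', y) ∈ Γ →
      ruPhi c Γ p₀ x ≤ ruPhi c Γ p₀ x' + ((c (x, y)).toEReal - (c (x', y)).toEReal)) :=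
  ruPhi_finite_and_ineq_general c Γ hmono hΓfin hconn p₀ hp₀
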